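/- Let n ≥ 3 and let x, y : Fin n → ℝ be two data vectors. Define A₁(i) = (1/n)·Σ_k |x_i − x_k|, A₂(i) = (1/n)·Σ_k |y_i − y_k|, B₁ = (1/n)·Σ_i A₁(i), B₂ = (1/n)·Σ_i A₂(i); define the U-statistics U₁ₙ = C(n,2)⁻¹·Σ_{i<j} |x_i−x_j|, U₂ₙ = C(n,2)⁻¹·Σ_{i<j} |y_i−y_j|, U₁₂ₙ = C(n,2)⁻¹·Σ_{i<j} |x_i−x_j|·|y_i−y_j|, and U₃ₙ = C(n,3)⁻¹·Σ_{i<j<k} h(i,j,k) where h(i,j,k) = (1/6)·( |x_i−x_j|·|y_i−y_k| + |x_j−x_i|·|y_j−y_k| + |x_i−x_k|·|y_i−y_j| + |x_j−x_k|·|y_j−y_i| + |x_k−x_i|·|y_k−y_j| + |x_k−x_j|·|y_k−y_i| ); define κ* = (1/4)·( U₁₂ₙ + U₁ₙ·U₂ₙ − 2·U₃ₙ ). Define Bergsma's U-type estimate κ̃ = C(n,2)⁻¹·Σ_{i<j} h̃₁(i,j)·h̃₂(i,j) where h̃₁(i,j) = −(1/2)·( |x_i−x_j| − (n/(n−1))·A₁(i)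 − (n/(n−1))·A₁(j) + (n/(n−1))·B₁ ) and h̃₂(i,j) = −(1/2)·( |y_i−y_j| − (n/(n−1))·A₂(i) − (n/(n−1))·A₂(j) + (n/(n−1))·B₂ ). Then κ̃ = κ* + (1/4)·( (−2n/(n−1)²)·U₁₂ₙ + (2/(n−1)²)·U₃ₙ + (2/(n−1))·U₁ₙ·U₂ₙ ). -/

import Mathlib

open Finset

lemma pair_sum {n : ℕ} (f : Fin n → Fin n → ℝ) (hsym : ∀ i j, f i j = f j i) :
    2 * ∑ p ∈ univ.filter (fun p : Fin n × Fin n => p.1 < p.2), f p.1 p.2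
      = (∑ i, ∑ j, f i j) - ∑ i, f i i := by
  have hS : ∑ p ∈ univ.filter (fun p : Fin n × Fin n => p.1 < p.2), f p.1 p.2
      = ∑ i, ∑ j, if i < j then f i j else 0 := by
    rw [Finset.sum_filter, Fintype.sum_prod_type]
  have hpoint : ∀ i j : Fin n, f i j =
      (if i < j then f i j else 0) + (if j < i then f i j else 0)
        + (if i = j then f i j else 0) := by
    intro i j
    rcases lt_trichotomy i j with h | h | h
    · simp [h, h.ne, asymm h]
    · simp [h]
    · simp [h, h.ne', asymm h]
  have htot : ∑ i, ∑ j, f i j =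
      (∑ i, ∑ j, if i < j then f i j else 0) + ((∑ i, ∑ j, if j < i then f i j else 0)
        + (∑ i, ∑ j, if i = j then f i j else 0)) := by
    rw [← Finset.sum_add_distrib]
    simp_rw [← Finset.sum_add_distrib]
    exact Finset.sum_congr rfl fun i _ => Finset.sum_congr rfl fun j _ => by
      rw [← add_assoc]; exact hpoint i j
  have h2 : (∑ i, ∑ j, if j < i then f i j else 0) = ∑ i, ∑ j, if i < j then f i j else 0 := by
    rw [Finset.sum_comm]
    exact Finset.sum_congr rfl fun a _ => Finset.sum_congr rfl fun b _ => by rw [hsym]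
  have h3 : (∑ i, ∑ j, if i = j then f i j else 0) = ∑ i, f i i := by
    refine Finset.sum_congr rfl fun i _ => ?_
    simp
  rw [hS, htot, h2, h3]; ring


lemma ite_helper (p q r : ℕ) (g d : ℝ) (hpq : p = q → g = 0) (hpr : p = r → g = 0)
    (hqr : q = r → g = d) :
    g = (if p < q ∧ q < r then g else 0) + (if p < r ∧ r < q then g else 0)
      + (if q < p ∧ p < r then g else 0) + (if q < r ∧ r < p then g else 0)
      + (if r < p ∧ p < q then g else 0) + (if r < q ∧ q < p then g else 0)
      + (if q = r then d else 0) := by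
  split_ifs <;> (try (exfalso; omega)) <;> (try ring) <;>
    first
      | (rw [hqr (by omega)]; try ring)
      | (rcases (by omega : p = q ∨ p = r) with hh | hh
         · rw [hpq hh]; try ring
         · rw [hpr hh]; try ring)

lemma fin_point {n : ℕ} (a b : Fin n → Fin n → ℝ) (ha0 : ∀ i, a i i = 0) (hb0 : ∀ i, b i i = 0)
    (i j k : Fin n) :
    a i j * b i k =
      (if i < j ∧ j < k then a i j * b i k else 0) + (if i < k ∧ k < j then a i j * b i k else 0)
      + (if j < i ∧ i < k then a i j * b i k else 0) + (if j < k ∧ k < i then a i j * b i k else 0)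
      + (if k < i ∧ i < j then a i j * b i k else 0) + (if k < j ∧ j < i then a i j * b i k else 0)
      + (if j = k then a i j * b i j else 0) := by
  have h := ite_helper i.1 j.1 k.1 (a i j * b i k) (a i j * b i j)
    (fun hh => by rw [(Fin.val_injective hh : i = j)]; rw [ha0]; ring)
    (fun hh => by rw [(Fin.val_injective hh : i = k)] ; rw [hb0]; ring)
    (fun hh => by rw [(Fin.val_injective hh : j = k)])
  simpa only [Fin.lt_def, Fin.ext_iff] using h

lemma conv_triple {n : ℕ} (c : Fin n × Fin n × Fin n → Prop) [DecidablePred c]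
    (f : Fin n × Fin n × Fin n → ℝ) :
    ∑ t ∈ univ.filter c, f t = ∑ i, ∑ j, ∑ k, if c (i, j, k) then f (i, j, k) else 0 := by
  rw [Finset.sum_filter, Fintype.sum_prod_type]
  simp_rw [Fintype.sum_prod_type]

lemma triple_sum {n : ℕ} (a b : Fin n → Fin n → ℝ) (ha0 : ∀ i, a i i = 0)
    (hb0 : ∀ i, b i i = 0) :
    ∑ t ∈ univ.filter (fun t : Fin n × Fin n × Fin n => t.1 < t.2.1 ∧ t.2.1 < t.2.2),
        (a t.1 t.2.1 * b t.1 t.2.2 + a t.1 t.2.2 * b t.1 t.2.1 +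
         a t.2.1 t.1 * b t.2.1 t.2.2 + a t.2.1 t.2.2 * b t.2.1 t.1 +
         a t.2.2 t.1 * b t.2.2 t.2.1 + a t.2.2 t.2.1 * b t.2.2 t.1)
      = (∑ i, ∑ j, ∑ k, a i j * b i k) - ∑ i, ∑ j, a i j * b i j := by
  classical
  have hfull : ∑ i, ∑ j, ∑ k, a i j * b i k =
      (∑ i, ∑ j, ∑ k, if i < j ∧ j < k then a i j * b i k else 0)
      + (∑ i, ∑ j, ∑ k, if i < k ∧ k < j then a i j * b i k else 0)
      + (∑ i, ∑ j, ∑ k, if j < i ∧ i < k then a i j * b i k else 0)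
      + (∑ i, ∑ j, ∑ k, if j < k ∧ k < i then a i j * b i k else 0)
      + (∑ i, ∑ j, ∑ k, if k < i ∧ i < j then a i j * b i k else 0)
      + (∑ i, ∑ j, ∑ k, if k < j ∧ j < i then a i j * b i k else 0)
      + (∑ i, ∑ j, ∑ k, if j = k then a i j * b i j else 0) := by
    simp_rw [← Finset.sum_add_distrib]
    exact Finset.sum_congr rfl fun i _ => Finset.sum_congr rfl fun j _ =>
      Finset.sum_congr rfl fun k _ => fin_point a b ha0 hb0 i j k
  have hdiag : (∑ i, ∑ j, ∑ k : Fin n, if j = k then a i j * b i j else 0)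
      = ∑ i, ∑ j, a i j * b i j := by
    refine Finset.sum_congr rfl fun i _ => Finset.sum_congr rfl fun j _ => ?_
    simp
  -- the six bijections
  have b1 : (∑ i, ∑ j, ∑ k, if i < j ∧ j < k then a i j * b i k else 0)
      = ∑ t ∈ univ.filter (fun t : Fin n × Fin n × Fin n => t.1 < t.2.1 ∧ t.2.1 < t.2.2),
          a t.1 t.2.1 * b t.1 t.2.2 := by
    rw [conv_triple]
  have b2 : (∑ i, ∑ j, ∑ k, if i < k ∧ k < j then a i j * b i k else 0)
      = ∑ t ∈ univ.filter (fun t : Fin n × Fin n × Fin n => t.1 < t.2.1 ∧ t.2.1 < t.2.2),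
          a t.1 t.2.2 * b t.1 t.2.1 := by
    rw [← conv_triple (fun t : Fin n × Fin n × Fin n => t.1 < t.2.2 ∧ t.2.2 < t.2.1)
      (fun t => a t.1 t.2.1 * b t.1 t.2.2)]
    refine Finset.sum_nbij' (fun t => (t.1, t.2.2, t.2.1)) (fun t => (t.1, t.2.2, t.2.1))
      ?_ ?_ ?_ ?_ ?_ <;> simp [Finset.mem_filter] <;> tauto
  have b3 : (∑ i, ∑ j, ∑ k, if j < i ∧ i < k then a i j * b i k else 0)
      = ∑ t ∈ univ.filter (fun t : Fin n × Fin n × Fin n => t.1 < t.2.1 ∧ t.2.1 < t.2.2),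
          a t.2.1 t.1 * b t.2.1 t.2.2 := by
    rw [← conv_triple (fun t : Fin n × Fin n × Fin n => t.2.1 < t.1 ∧ t.1 < t.2.2)
      (fun t => a t.1 t.2.1 * b t.1 t.2.2)]
    refine Finset.sum_nbij' (fun t => (t.2.1, t.1, t.2.2)) (fun t => (t.2.1, t.1, t.2.2))
      ?_ ?_ ?_ ?_ ?_ <;> simp [Finset.mem_filter] <;> tauto
  have b4 : (∑ i, ∑ j, ∑ k, if j < k ∧ k < i then a i j * b i k else 0)
      = ∑ t ∈ univ.filter (fun t : Fin n × Fin n × Fin n => t.1 < t.2.1 ∧ t.2.1 < t.2.2),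
          a t.2.2 t.1 * b t.2.2 t.2.1 := by
    rw [← conv_triple (fun t : Fin n × Fin n × Fin n => t.2.1 < t.2.2 ∧ t.2.2 < t.1)
      (fun t => a t.1 t.2.1 * b t.1 t.2.2)]
    refine Finset.sum_nbij' (fun t => (t.2.1, t.2.2, t.1)) (fun t => (t.2.2, t.1, t.2.1))
      ?_ ?_ ?_ ?_ ?_ <;> simp [Finset.mem_filter] <;> tauto
  have b5 : (∑ i, ∑ j, ∑ k, if k < i ∧ i < j then a i j * b i k else 0)
      = ∑ t ∈ univ.filter (fun t : Fin n × Fin n × Fin n => t.1 < t.2.1 ∧ t.2.1 < t.2.2),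
          a t.2.1 t.2.2 * b t.2.1 t.1 := by
    rw [← conv_triple (fun t : Fin n × Fin n × Fin n => t.2.2 < t.1 ∧ t.1 < t.2.1)
      (fun t => a t.1 t.2.1 * b t.1 t.2.2)]
    refine Finset.sum_nbij' (fun t => (t.2.2, t.1, t.2.1)) (fun t => (t.2.1, t.2.2, t.1))
      ?_ ?_ ?_ ?_ ?_ <;> simp [Finset.mem_filter] <;> tauto
  have b6 : (∑ i, ∑ j, ∑ k, if k < j ∧ j < i then a i j * b i k else 0)
      = ∑ t ∈ univ.filter (fun t : Fin n × Fin n × Fin n => t.1 < t.2.1 ∧ t.2.1 < t.2.2),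
          a t.2.2 t.2.1 * b t.2.2 t.1 := by
    rw [← conv_triple (fun t : Fin n × Fin n × Fin n => t.2.2 < t.2.1 ∧ t.2.1 < t.1)
      (fun t => a t.1 t.2.1 * b t.1 t.2.2)]
    refine Finset.sum_nbij' (fun t => (t.2.2, t.2.1, t.1)) (fun t => (t.2.2, t.2.1, t.1))
      ?_ ?_ ?_ ?_ ?_ <;> simp [Finset.mem_filter] <;> tauto
  rw [hfull, hdiag, b1, b2, b3, b4, b5, b6, ← Finset.sum_add_distrib,
    ← Finset.sum_add_distrib, ← Finset.sum_add_distrib, ← Finset.sum_add_distrib,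
    ← Finset.sum_add_distrib]
  rw [add_sub_cancel_right]
  exact Finset.sum_congr rfl fun t _ => by ring


lemma dsum_smul {n : ℕ} (r : ℝ) (f : Fin n → Fin n → ℝ) :
    ∑ i, ∑ j, r * f i j = r * ∑ i, ∑ j, f i j := by
  rw [Finset.mul_sum]
  exact Finset.sum_congr rfl fun i _ => by rw [Finset.mul_sum]

lemma ssum_smul {n : ℕ} (r : ℝ) (f : Fin n → ℝ) :
    ∑ i, r * f i = r * ∑ i, f i := (Finset.mul_sum _ _ _).symm

set_option maxHeartbeats 2000000 in
theorem stmt19 (n : ℕ) (hn : 3 ≤ n) (x y : Fin n → ℝ)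
    (A₁ A₂ : Fin n → ℝ) (B₁ B₂ U₁ U₂ U₁₂ U₃ κstar κtilde : ℝ)
    (h : Fin n → Fin n → Fin n → ℝ) (ht₁ ht₂ : Fin n → Fin n → ℝ)
    (hA₁ : ∀ i, A₁ i = (1 / (n : ℝ)) * ∑ k, |x i - x k|)
    (hA₂ : ∀ i, A₂ i = (1 / (n : ℝ)) * ∑ k, |y i - y k|)
    (hB₁ : B₁ = (1 / (n : ℝ)) * ∑ i, A₁ i)
    (hB₂ : B₂ = (1 / (n : ℝ)) * ∑ i, A₂ i)
    (hU₁ : U₁ = ((n.choose 2 : ℝ))⁻¹ *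
      ∑ p ∈ univ.filter (fun p : Fin n × Fin n => p.1 < p.2), |x p.1 - x p.2|)
    (hU₂ : U₂ = ((n.choose 2 : ℝ))⁻¹ *
      ∑ p ∈ univ.filter (fun p : Fin n × Fin n => p.1 < p.2), |y p.1 - y p.2|)
    (hU₁₂ : U₁₂ = ((n.choose 2 : ℝ))⁻¹ *
      ∑ p ∈ univ.filter (fun p : Fin n × Fin n => p.1 < p.2),
        |x p.1 - x p.2| * |y p.1 - y p.2|)
    (hker : ∀ i j k, h i j k = (1 / 6) *
      (|x i - x j| * |y i - y k| + |x j - x i| * |y j - y k| +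
        |x i - x k| * |y i - y j| + |x j - x k| * |y j - y i| +
        |x k - x i| * |y k - y j| + |x k - x j| * |y k - y i|))
    (hU₃ : U₃ = ((n.choose 3 : ℝ))⁻¹ *
      ∑ t ∈ univ.filter (fun t : Fin n × Fin n × Fin n => t.1 < t.2.1 ∧ t.2.1 < t.2.2),
        h t.1 t.2.1 t.2.2)
    (hκstar : κstar = (1 / 4) * (U₁₂ + U₁ * U₂ - 2 * U₃))
    (hht₁ : ∀ i j, ht₁ i j = -(1 / 2) *
      (|x i - x j| - ((n : ℝ) / ((n : ℝ) - 1)) * A₁ i -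
        ((n : ℝ) / ((n : ℝ) - 1)) * A₁ j + ((n : ℝ) / ((n : ℝ) - 1)) * B₁))
    (hht₂ : ∀ i j, ht₂ i j = -(1 / 2) *
      (|y i - y j| - ((n : ℝ) / ((n : ℝ) - 1)) * A₂ i -
        ((n : ℝ) / ((n : ℝ) - 1)) * A₂ j + ((n : ℝ) / ((n : ℝ) - 1)) * B₂))
    (hκtilde : κtilde = ((n.choose 2 : ℝ))⁻¹ *
      ∑ p ∈ univ.filter (fun p : Fin n × Fin n => p.1 < p.2), ht₁ p.1 p.2 * ht₂ p.1 p.2) :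
    κtilde = κstar + (1 / 4) *
      ((-2 * (n : ℝ) / ((n : ℝ) - 1) ^ 2) * U₁₂ +
        (2 / ((n : ℝ) - 1) ^ 2) * U₃ + (2 / ((n : ℝ) - 1)) * U₁ * U₂) := by
  classical
  have hn3 : (3 : ℝ) ≤ (n : ℝ) := by exact_mod_cast hn
  have hn0 : (n : ℝ) ≠ 0 := by linarith
  have hn1 : (n : ℝ) - 1 ≠ 0 := by intro hh; linarith
  have hn2 : (n : ℝ) - 2 ≠ 0 := by intro hh; linarith
  have hcard : (univ : Finset (Fin n)).card = n := by simp
  have hc2 : (n.choose 2 : ℝ) = (n : ℝ) * ((n : ℝ) - 1) / 2 := Nat.cast_choose_two ℝ n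
  have hc3 : (n.choose 3 : ℝ) = (n : ℝ) * ((n : ℝ) - 1) * ((n : ℝ) - 2) / 6 := by
    have hnat : 6 * n.choose 3 = n * (n - 1) * (n - 2) := by
      have hd := Nat.descFactorial_eq_factorial_mul_choose n 3
      rw [Nat.descFactorial_succ, Nat.descFactorial_succ, Nat.descFactorial_succ,
        Nat.descFactorial_zero] at hd
      rw [show Nat.factorial 3 = 6 from rfl] at hd
      rw [← hd, Nat.sub_zero]
      ring
    have hcast := congrArg (Nat.cast : ℕ → ℝ) hnat
    push_cast [Nat.cast_sub (by omega : 1 ≤ n), Nat.cast_sub (by omega : 2 ≤ n)] at hcast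
    linarith
  -- row/column sums
  have ra : ∀ i, ∑ k, |x i - x k| = (n : ℝ) * A₁ i := by
    intro i; rw [hA₁ i]; field_simp
  have rb : ∀ i, ∑ k, |y i - y k| = (n : ℝ) * A₂ i := by
    intro i; rw [hA₂ i]; field_simp
  have rca : ∀ j, ∑ i, |x i - x j| = (n : ℝ) * A₁ j := by
    intro j; simp_rw [abs_sub_comm (x _) (x j)]; exact ra j
  have rcb : ∀ j, ∑ i, |y i - y j| = (n : ℝ) * A₂ j := by
    intro j; simp_rw [abs_sub_comm (y _) (y j)]; exact rb j
  have sA₁ : ∑ i, A₁ i = (n : ℝ) * B₁ := by rw [hB₁]; field_simp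
  have sA₂ : ∑ i, A₂ i = (n : ℝ) * B₂ := by rw [hB₂]; field_simp
  set P : ℝ := ∑ i, A₁ i * A₂ i with hP
  set Q : ℝ := ∑ i, ∑ j, |x i - x j| * |y i - y j| with hQ
  set c : ℝ := (n : ℝ) / ((n : ℝ) - 1) with hc
  -- elementary double sums
  have E2 : ∑ i, ∑ j, |x i - x j| * A₂ i = (n : ℝ) * P := by
    calc ∑ i, ∑ j, |x i - x j| * A₂ i = ∑ i, (n : ℝ) * (A₁ i * A₂ i) := by
          refine Finset.sum_congr rfl fun i _ => ?_
          rw [← Finset.sum_mul, ra]; ring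
      _ = (n : ℝ) * P := by rw [hP, ← Finset.mul_sum]
  have E3 : ∑ i, ∑ j, |x i - x j| * A₂ j = (n : ℝ) * P := by
    rw [Finset.sum_comm]
    calc ∑ j : Fin n, ∑ i : Fin n, |x i - x j| * A₂ j
        = ∑ j, (n : ℝ) * (A₁ j * A₂ j) := by
          refine Finset.sum_congr rfl fun j _ => ?_
          rw [← Finset.sum_mul, rca]; ring
      _ = (n : ℝ) * P := by rw [hP, ← Finset.mul_sum]
  have E4 : ∑ i, ∑ j, |x i - x j| = (n : ℝ) * ((n : ℝ) * B₁) := by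
    simp_rw [ra]
    rw [← Finset.mul_sum, sA₁]
  have E5 : ∑ i, ∑ j, |y i - y j| * A₁ i = (n : ℝ) * P := by
    calc ∑ i, ∑ j, |y i - y j| * A₁ i = ∑ i, (n : ℝ) * (A₁ i * A₂ i) := by
          refine Finset.sum_congr rfl fun i _ => ?_
          rw [← Finset.sum_mul, rb]; ring
      _ = (n : ℝ) * P := by rw [hP, ← Finset.mul_sum]
  have E6 : ∑ i, ∑ j, |y i - y j| * A₁ j = (n : ℝ) * P := by
    rw [Finset.sum_comm]
    calc ∑ j : Fin n, ∑ i : Fin n, |y i - y j| * A₁ j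
        = ∑ j, (n : ℝ) * (A₁ j * A₂ j) := by
          refine Finset.sum_congr rfl fun j _ => ?_
          rw [← Finset.sum_mul, rcb]; ring
      _ = (n : ℝ) * P := by rw [hP, ← Finset.mul_sum]
  have E7 : ∑ i, ∑ j, |y i - y j| = (n : ℝ) * ((n : ℝ) * B₂) := by
    simp_rw [rb]
    rw [← Finset.mul_sum, sA₂]
  have E8 : ∑ i : Fin n, ∑ _j : Fin n, A₁ i * A₂ i = (n : ℝ) * P := by
    calc ∑ i : Fin n, ∑ _j : Fin n, A₁ i * A₂ i
        = ∑ i, (n : ℝ) * (A₁ i * A₂ i) := by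
          refine Finset.sum_congr rfl fun i _ => ?_
          rw [Finset.sum_const, hcard, nsmul_eq_mul]
      _ = (n : ℝ) * P := by rw [← Finset.mul_sum]
  have E9 : ∑ i : Fin n, ∑ j : Fin n, A₁ i * A₂ j = ((n : ℝ) * B₁) * ((n : ℝ) * B₂) := by
    simp_rw [← Finset.mul_sum, sA₂]
    rw [← Finset.sum_mul, sA₁]
  have E10 : ∑ i : Fin n, ∑ j : Fin n, A₁ j * A₂ i = ((n : ℝ) * B₁) * ((n : ℝ) * B₂) := by
    simp_rw [← Finset.sum_mul, sA₁]
    rw [← Finset.mul_sum, sA₂]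
  have E11 : ∑ _i : Fin n, ∑ j : Fin n, A₁ j * A₂ j = (n : ℝ) * P := by
    rw [← hP, Finset.sum_const, hcard, nsmul_eq_mul]
  have E12 : ∑ i : Fin n, ∑ _j : Fin n, A₁ i = (n : ℝ) * ((n : ℝ) * B₁) := by
    calc ∑ i : Fin n, ∑ _j : Fin n, A₁ i = ∑ i, (n : ℝ) * A₁ i := by
          refine Finset.sum_congr rfl fun i _ => ?_
          rw [Finset.sum_const, hcard, nsmul_eq_mul]
      _ = (n : ℝ) * ((n : ℝ) * B₁) := by rw [← Finset.mul_sum, sA₁]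
  have E13 : ∑ _i : Fin n, ∑ j : Fin n, A₁ j = (n : ℝ) * ((n : ℝ) * B₁) := by
    rw [sA₁, Finset.sum_const, hcard, nsmul_eq_mul]
  have E14 : ∑ i : Fin n, ∑ _j : Fin n, A₂ i = (n : ℝ) * ((n : ℝ) * B₂) := by
    calc ∑ i : Fin n, ∑ _j : Fin n, A₂ i = ∑ i, (n : ℝ) * A₂ i := by
          refine Finset.sum_congr rfl fun i _ => ?_
          rw [Finset.sum_const, hcard, nsmul_eq_mul]
      _ = (n : ℝ) * ((n : ℝ) * B₂) := by rw [← Finset.mul_sum, sA₂]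
  have E15 : ∑ _i : Fin n, ∑ j : Fin n, A₂ j = (n : ℝ) * ((n : ℝ) * B₂) := by
    rw [sA₂, Finset.sum_const, hcard, nsmul_eq_mul]
  have E16 : ∑ _i : Fin n, ∑ _j : Fin n, (1 : ℝ) = (n : ℝ) * (n : ℝ) := by
    simp [Finset.sum_const, hcard]
  -- pairwise sums
  have pa := pair_sum (fun i j => |x i - x j|) (fun i j => abs_sub_comm (x i) (x j))
  have pb := pair_sum (fun i j => |y i - y j|) (fun i j => abs_sub_comm (y i) (y j))
  have pab := pair_sum (fun i j => |x i - x j| * |y i - y j|)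
    (fun i j => by
      show |x i - x j| * |y i - y j| = |x j - x i| * |y j - y i|
      rw [abs_sub_comm (x i), abs_sub_comm (y i)])
  have pht := pair_sum (fun i j => ht₁ i j * ht₂ i j)
    (fun i j => by
      show ht₁ i j * ht₂ i j = ht₁ j i * ht₂ j i
      rw [hht₁ i j, hht₁ j i, hht₂ i j, hht₂ j i, abs_sub_comm (x i), abs_sub_comm (y i)]
      ring)
  try simp only [] at pa pb pab pht
  rw [E4] at pa
  rw [E7] at pb
  rw [← hQ] at pab
  have diag0x : ∑ i, |x i - x i| = 0 := by simp
  have diag0y : ∑ i, |y i - y i| = 0 := by simp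
  have diag0xy : ∑ i, |x i - x i| * |y i - y i| = 0 := by simp
  rw [diag0x] at pa
  rw [diag0y] at pb
  rw [diag0xy] at pab
  -- expansion of the ht product double sum
  have e1 : ∀ i j, ht₁ i j * ht₂ i j =
      (1/4) * (|x i - x j| * |y i - y j|)
      + (-(c/4)) * (|x i - x j| * A₂ i)
      + (-(c/4)) * (|x i - x j| * A₂ j)
      + (c*B₂/4) * (|x i - x j|)
      + (-(c/4)) * (|y i - y j| * A₁ i)
      + (-(c/4)) * (|y i - y j| * A₁ j)
      + (c*B₁/4) * (|y i - y j|)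
      + (c^2/4) * (A₁ i * A₂ i)
      + (c^2/4) * (A₁ i * A₂ j)
      + (c^2/4) * (A₁ j * A₂ i)
      + (c^2/4) * (A₁ j * A₂ j)
      + (-(c^2*B₂/4)) * (A₁ i)
      + (-(c^2*B₂/4)) * (A₁ j)
      + (-(c^2*B₁/4)) * (A₂ i)
      + (-(c^2*B₁/4)) * (A₂ j)
      + (c^2*B₁*B₂/4) * (1:ℝ) := by
    intro i j
    rw [hht₁, hht₂]
    ring
  have hD2 : ∑ i, ∑ j, ht₁ i j * ht₂ i j =
      (1/4) * Q
      + (-(c/4)) * ((n : ℝ) * P)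
      + (-(c/4)) * ((n : ℝ) * P)
      + (c*B₂/4) * ((n : ℝ) * ((n : ℝ) * B₁))
      + (-(c/4)) * ((n : ℝ) * P)
      + (-(c/4)) * ((n : ℝ) * P)
      + (c*B₁/4) * ((n : ℝ) * ((n : ℝ) * B₂))
      + (c^2/4) * ((n : ℝ) * P)
      + (c^2/4) * (((n : ℝ) * B₁) * ((n : ℝ) * B₂))
      + (c^2/4) * (((n : ℝ) * B₁) * ((n : ℝ) * B₂))
      + (c^2/4) * ((n : ℝ) * P)
      + (-(c^2*B₂/4)) * ((n : ℝ) * ((n : ℝ) * B₁))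
      + (-(c^2*B₂/4)) * ((n : ℝ) * ((n : ℝ) * B₁))
      + (-(c^2*B₁/4)) * ((n : ℝ) * ((n : ℝ) * B₂))
      + (-(c^2*B₁/4)) * ((n : ℝ) * ((n : ℝ) * B₂))
      + (c^2*B₁*B₂/4) * ((n : ℝ) * (n : ℝ)) := by
    simp_rw [e1]
    simp only [Finset.sum_add_distrib]
    simp only [dsum_smul]
    rw [← hQ, E2, E3, E4, E5, E6, E7, E8, E9, E10, E11, E12, E13, E14, E15, E16]
  have e1d : ∀ i, ht₁ i i * ht₂ i i =
      c^2 * (A₁ i * A₂ i) + (-(c^2*B₂/2)) * (A₁ i) + (-(c^2*B₁/2)) * (A₂ i)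
        + (c^2*B₁*B₂/4) * (1:ℝ) := by
    intro i
    rw [hht₁, hht₂]
    simp only [sub_self, abs_zero]
    ring
  have hDdiag : ∑ i, ht₁ i i * ht₂ i i =
      c^2 * P + (-(c^2*B₂/2)) * ((n : ℝ) * B₁) + (-(c^2*B₁/2)) * ((n : ℝ) * B₂)
        + (c^2*B₁*B₂/4) * (n : ℝ) := by
    have E1s : ∑ _i : Fin n, (1 : ℝ) = (n : ℝ) := by
      rw [Finset.sum_const, hcard, nsmul_eq_mul, mul_one]
    simp_rw [e1d]
    simp only [Finset.sum_add_distrib]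
    simp only [ssum_smul]
    rw [← hP, sA₁, sA₂, E1s]
  rw [hD2, hDdiag] at pht
  -- the triple sum
  have T := triple_sum (fun i j => |x i - x j|) (fun i j => |y i - y j|)
    (fun i => by simp) (fun i => by simp)
  have Tfull : ∑ i, ∑ j, ∑ k, |x i - x j| * |y i - y k| = (n : ℝ) * ((n : ℝ) * P) := by
    calc ∑ i, ∑ j, ∑ k, |x i - x j| * |y i - y k|
        = ∑ i, (n : ℝ) * ((n : ℝ) * (A₁ i * A₂ i)) := by
          refine Finset.sum_congr rfl fun i _ => ?_
          simp_rw [← Finset.mul_sum, rb]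
          rw [← Finset.sum_mul, ra]
          ring
      _ = (n : ℝ) * ((n : ℝ) * P) := by rw [hP]; simp_rw [← Finset.mul_sum]
  rw [Tfull, ← hQ] at T
  have hIsum : ∑ t ∈ univ.filter (fun t : Fin n × Fin n × Fin n => t.1 < t.2.1 ∧ t.2.1 < t.2.2),
      h t.1 t.2.1 t.2.2 = (1/6) * ((n : ℝ) * ((n : ℝ) * P) - Q) := by
    rw [← T, Finset.mul_sum]
    refine Finset.sum_congr rfl fun t _ => ?_
    rw [hker]
    ring
  -- final assembly
  rw [hκtilde, hκstar, hU₁, hU₂, hU₁₂, hU₃, hIsum, hc2, hc3]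
  have hSht : ∑ p ∈ univ.filter (fun p : Fin n × Fin n => p.1 < p.2), ht₁ p.1 p.2 * ht₂ p.1 p.2
      = (((1/4) * Q
      + (-(c/4)) * ((n : ℝ) * P)
      + (-(c/4)) * ((n : ℝ) * P)
      + (c*B₂/4) * ((n : ℝ) * ((n : ℝ) * B₁))
      + (-(c/4)) * ((n : ℝ) * P)
      + (-(c/4)) * ((n : ℝ) * P)
      + (c*B₁/4) * ((n : ℝ) * ((n : ℝ) * B₂))
      + (c^2/4) * ((n : ℝ) * P)
      + (c^2/4) * (((n : ℝ) * B₁) * ((n : ℝ) * B₂))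
      + (c^2/4) * (((n : ℝ) * B₁) * ((n : ℝ) * B₂))
      + (c^2/4) * ((n : ℝ) * P)
      + (-(c^2*B₂/4)) * ((n : ℝ) * ((n : ℝ) * B₁))
      + (-(c^2*B₂/4)) * ((n : ℝ) * ((n : ℝ) * B₁))
      + (-(c^2*B₁/4)) * ((n : ℝ) * ((n : ℝ) * B₂))
      + (-(c^2*B₁/4)) * ((n : ℝ) * ((n : ℝ) * B₂))
      + (c^2*B₁*B₂/4) * ((n : ℝ) * (n : ℝ)))
      - (c^2 * P + (-(c^2*B₂/2)) * ((n : ℝ) * B₁) + (-(c^2*B₁/2)) * ((n : ℝ) * B₂)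
        + (c^2*B₁*B₂/4) * (n : ℝ))) / 2 := by rw [← pht]; ring
  have hSa : ∑ p ∈ univ.filter (fun p : Fin n × Fin n => p.1 < p.2), |x p.1 - x p.2|
      = ((n : ℝ) * ((n : ℝ) * B₁) - 0) / 2 := by rw [← pa]; ring
  have hSb : ∑ p ∈ univ.filter (fun p : Fin n × Fin n => p.1 < p.2), |y p.1 - y p.2|
      = ((n : ℝ) * ((n : ℝ) * B₂) - 0) / 2 := by rw [← pb]; ring
  have hSab : ∑ p ∈ univ.filter (fun p : Fin n × Fin n => p.1 < p.2),
      |x p.1 - x p.2| * |y p.1 - y p.2| = (Q - 0) / 2 := by rw [← pab]; ring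
  rw [hSht, hSa, hSb, hSab, hc]
  field_simp
  ring
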